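/- Let X ⊂ ℝ^d be compact and P a distribution on X × Y with an envelope of order γ > 0 and Tsybakov noise exponent q ∈ [0,∞). Then P has geometric noise exponent (q+1)γ/d if q ≥ 1, and geometric noise exponent α for every α < (q+1)γ/d if 0 ≤ q < 1. -/

import Mathlib

open MeasureTheory Metric

/-- The distance `τ_x` of a point to the union of the set `{η = 1/2}` and the opposite class. -/
noncomputable def tauDist {d : ℕ} (X : Set (EuclideanSpace ℝ (Fin d)))
    (η : EuclideanSpace ℝ (Fin d) → ℝ) (x : EuclideanSpace ℝ (Fin d)) : ℝ :=
  if η x < 1 / 2 then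
    infDist x ({z ∈ X | η z = 1 / 2} ∪ {z ∈ X | 1 / 2 < η z})
  else if 1 / 2 < η x then
    infDist x ({z ∈ X | η z = 1 / 2} ∪ {z ∈ X | η z < 1 / 2})
  else 0

/-- `P` has geometric noise exponent `α`:
`∫_X |2η-1| exp(-τ_x²/t) dP_X ≤ C t^{αd/2}` for all `t > 0`. -/
def HasGeomNoiseExponent {d : ℕ} (X : Set (EuclideanSpace ℝ (Fin d)))
    (μ : Measure (EuclideanSpace ℝ (Fin d))) (η : EuclideanSpace ℝ (Fin d) → ℝ)
    (α : ℝ) : Prop :=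
  ∃ C : ℝ, 0 < C ∧ ∀ t : ℝ, 0 < t →
    ∫ x in X, |2 * η x - 1| * Real.exp (-(tauDist X η x) ^ 2 / t) ∂μ ≤
      C * t ^ (α * d / 2)

/-! Put `f = |2η - 1|`, `g = τ` and `F = (f / c_γ)^{2/γ}`. The envelope gives `F ≤ g²`, so
`f e^{-g²/t} ≤ c_γ F^{γ/2} e^{-F/t}`. Bounding `s^{γ/2} e^{-s/t}` by the tail integral
`∫_s^∞ u^{γ/2} e^{-u/t} du / t` and exchanging the integrals turns the `P_X`-integral into
`∫_0^∞ u^{γ/2} e^{-u/t} P_X(F < u) du / t`; the Tsybakov condition bounds `P_X(F < u)` by a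
multiple of `u^{γq/2}`, and the remaining Gamma integral is `O(t^{(q+1)γ/2})`. For `t > 1` the
trivial bound `1` suffices, so every `α ≥ 0` with `αd ≤ (q+1)γ` is a geometric noise exponent. -/

open Set Real
open scoped ENNReal

section TailBounds

variable {E : Type*} [MeasurableSpace E] (μ : Measure E)

theorem lintegral_setLIntegral_Ioi_eq_lintegral_mul_measure_lt [SFinite μ] (ν : Measure ℝ)
    [SFinite ν] {F : E → ℝ} (hF : Measurable F) {k : ℝ → ℝ≥0∞} (hk : Measurable k) :
    ∫⁻ x, ∫⁻ u in Ioi (F x), k u ∂ν ∂μ = ∫⁻ u, k u * μ {x | F x < u} ∂ν := by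
  set S : Set (E × ℝ) := {z | F z.1 < z.2}
  have hS : MeasurableSet S := measurableSet_lt (hF.comp measurable_fst) measurable_snd
  calc ∫⁻ x, ∫⁻ u in Ioi (F x), k u ∂ν ∂μ
      = ∫⁻ x, ∫⁻ u, S.indicator (fun z => k z.2) (x, u) ∂ν ∂μ := by
        refine lintegral_congr fun x => ?_
        rw [← lintegral_indicator measurableSet_Ioi]
        rfl
    _ = ∫⁻ u, ∫⁻ x, S.indicator (fun z => k z.2) (x, u) ∂μ ∂ν :=
        lintegral_lintegral_swap ((hk.comp measurable_snd).indicator hS).aemeasurable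
    _ = ∫⁻ u, k u * μ {x | F x < u} ∂ν := by
        refine lintegral_congr fun u => ?_
        rw [← lintegral_indicator_const (measurableSet_lt hF measurable_const)]
        rfl

theorem lintegral_Ioi_mul_exp_neg_mul {r : ℝ} (hr : 0 < r) (s : ℝ) :
    ∫⁻ u in Ioi s, ENNReal.ofReal (r * exp (-(r * u))) = ENNReal.ofReal (exp (-(r * s))) := by
  have hint : ∫ u in Ioi s, exp (-(r * u)) = exp (-(r * s)) / r := by
    simpa [neg_mul, neg_div_neg_eq] using integral_exp_mul_Ioi (neg_lt_zero.mpr hr) s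
  rw [← ofReal_integral_eq_lintegral_ofReal, integral_const_mul, hint, mul_div_cancel₀ _ hr.ne']
  · simpa only [neg_mul] using (exp_neg_integrableOn_Ioi s hr).const_mul r
  · exact ae_of_all _ fun u => by positivity

theorem ofReal_rpow_mul_exp_neg_mul_le {p r s : ℝ} (hp : 0 ≤ p) (hr : 0 < r) (hs : 0 ≤ s) :
    ENNReal.ofReal (s ^ p * exp (-(r * s))) ≤
      ∫⁻ u in Ioi s, ENNReal.ofReal (u ^ p * (r * exp (-(r * u)))) :=
  calc ENNReal.ofReal (s ^ p * exp (-(r * s)))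
      = ∫⁻ u in Ioi s, ENNReal.ofReal (s ^ p * (r * exp (-(r * u)))) := by
        simp_rw [ENNReal.ofReal_mul (rpow_nonneg hs p)]
        rw [lintegral_const_mul' _ _ ENNReal.ofReal_ne_top, lintegral_Ioi_mul_exp_neg_mul hr]
    _ ≤ _ := setLIntegral_mono' measurableSet_Ioi fun u hu =>
        ENNReal.ofReal_le_ofReal <| mul_le_mul_of_nonneg_right
          (rpow_le_rpow hs (le_of_lt hu) hp) (by positivity)

theorem lintegral_rpow_mul_exp_neg_mul_le [SFinite μ] {F : E → ℝ} (hF : Measurable F)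
    (hF0 : ∀ x, 0 ≤ F x) {p κ r C : ℝ} (hp : 0 ≤ p) (hpκ : -1 < p + κ) (hr : 0 < r) (hC : 0 ≤ C)
    (htail : ∀ u, 0 < u → μ {x | F x < u} ≤ ENNReal.ofReal (C * u ^ κ)) :
    ∫⁻ x, ENNReal.ofReal (F x ^ p * exp (-(r * F x))) ∂μ ≤
      ENNReal.ofReal (C * Gamma (p + κ + 1) / r ^ (p + κ)) := by
  set k : ℝ → ℝ≥0∞ := fun u => ENNReal.ofReal (u ^ p * (r * exp (-(r * u))))
  have hk : Measurable k := by fun_prop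
  have hint : IntegrableOn (fun u => u ^ (p + κ) * exp (-(r * u))) (Ioi 0) := by
    simpa only [rpow_one, neg_mul] using
      integrableOn_rpow_mul_exp_neg_mul_rpow (by linarith) one_pos hr
  have hGamma : ∫ u in Ioi 0, u ^ (p + κ) * exp (-(r * u)) =
      (1 / r) ^ (p + κ + 1) * Gamma (p + κ + 1) := by
    simpa only [add_sub_cancel_right] using
      integral_rpow_mul_exp_neg_mul_Ioi (a := p + κ + 1) (by linarith) hr
  calc ∫⁻ x, ENNReal.ofReal (F x ^ p * exp (-(r * F x))) ∂μ
      ≤ ∫⁻ x, (∫⁻ u in Ioi (F x), k u) ∂μ :=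
        lintegral_mono fun x => ofReal_rpow_mul_exp_neg_mul_le hp hr (hF0 x)
    _ = ∫⁻ u, k u * μ {x | F x < u} :=
        lintegral_setLIntegral_Ioi_eq_lintegral_mul_measure_lt μ volume hF hk
    _ ≤ ∫⁻ u in Ioi 0, ENNReal.ofReal (C * r * (u ^ (p + κ) * exp (-(r * u)))) := by
        rw [← lintegral_indicator measurableSet_Ioi]
        refine lintegral_mono fun u => ?_
        rcases le_or_gt u 0 with hu | hu
        · have hempty : {x | F x < u} = ∅ :=
            eq_empty_of_forall_notMem fun x hx => (hF0 x).not_gt (lt_of_lt_of_le hx hu)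
          simp [hempty]
        · rw [indicator_of_mem (mem_Ioi.mpr hu)]
          calc k u * μ {x | F x < u} ≤ k u * ENNReal.ofReal (C * u ^ κ) := by
                gcongr
                exact htail u hu
            _ = _ := by
              rw [← ENNReal.ofReal_mul (by positivity), rpow_add hu]
              ring_nf
    _ = ENNReal.ofReal (C * Gamma (p + κ + 1) / r ^ (p + κ)) := by
        rw [← ofReal_integral_eq_lintegral_ofReal (hint.const_mul _), integral_const_mul, hGamma]
        · congr 1
          rw [rpow_add_one (one_div_pos.mpr hr).ne', div_rpow zero_le_one hr.le, one_rpow]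
          field_simp
        · exact (ae_restrict_iff' measurableSet_Ioi).mpr (ae_of_all _ fun u hu => by
            have : 0 < u := hu
            positivity)

end TailBounds

section EnvelopeBounds

variable {E : Type*} [MeasurableSpace E] {μ : Measure E}

theorem integral_mul_exp_neg_sq_div_le_of_envelope [IsFiniteMeasure μ] {f g : E → ℝ}
    (hf : Measurable f) (hf0 : ∀ x, 0 ≤ f x) (hg : Measurable g) (hg0 : ∀ x, 0 ≤ g x)
    {γ c C q : ℝ} (hγ : 0 < γ) (hc : 0 < c) (hC : 0 ≤ C) (hq : 0 ≤ q)
    (henv : ∀ᵐ x ∂μ, f x ≤ c * g x ^ γ)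
    (htsy : ∀ s, 0 < s → (μ {x | f x ≤ s}).toReal ≤ C * s ^ q) {t : ℝ} (ht : 0 < t) :
    ∫ x, f x * exp (-g x ^ 2 / t) ∂μ ≤
      c ^ (q + 1) * C * Gamma ((q + 1) * γ / 2 + 1) * t ^ ((q + 1) * γ / 2) := by
  set F : E → ℝ := fun x => (f x / c) ^ (2 / γ)
  have hF0 : ∀ x, 0 ≤ F x := fun x => rpow_nonneg (div_nonneg (hf0 x) hc.le) _
  have hfF : ∀ x, f x = c * F x ^ (γ / 2) := fun x => by
    rw [← rpow_mul (div_nonneg (hf0 x) hc.le), show 2 / γ * (γ / 2) = 1 by field_simp,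
      rpow_one, mul_div_cancel₀ _ hc.ne']
  have hFg : ∀ᵐ x ∂μ, F x ≤ g x ^ 2 := by
    filter_upwards [henv] with x hx
    calc F x ≤ (g x ^ γ) ^ (2 / γ) :=
          rpow_le_rpow (div_nonneg (hf0 x) hc.le) ((div_le_iff₀' hc).mpr hx) (by positivity)
      _ = g x ^ 2 := by
          rw [← rpow_mul (hg0 x), mul_div_cancel₀ _ hγ.ne', rpow_two]
  have htail : ∀ u, 0 < u → μ {x | F x < u} ≤ ENNReal.ofReal (C * c ^ q * u ^ (γ / 2 * q)) := by
    intro u hu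
    have hsub : {x | F x < u} ⊆ {x | f x ≤ c * u ^ (γ / 2)} := fun x (hx : F x < u) => by
      change f x ≤ _
      rw [hfF x]
      exact mul_le_mul_of_nonneg_left (rpow_le_rpow (hF0 x) hx.le (by positivity)) hc.le
    calc μ {x | F x < u} ≤ μ {x | f x ≤ c * u ^ (γ / 2)} := measure_mono hsub
      _ ≤ ENNReal.ofReal (C * (c * u ^ (γ / 2)) ^ q) :=
          (ENNReal.le_ofReal_iff_toReal_le (measure_ne_top μ _) (by positivity)).mpr
            (htsy _ (by positivity))
      _ = ENNReal.ofReal (C * c ^ q * u ^ (γ / 2 * q)) := by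
          rw [mul_rpow hc.le (by positivity), ← rpow_mul hu.le, mul_assoc]
  have hgamma := lintegral_rpow_mul_exp_neg_mul_le μ (p := γ / 2) (κ := γ / 2 * q)
    (hf.div_const c |>.pow_const _) hF0 (by positivity) (by nlinarith) (inv_pos.mpr ht)
    (by positivity) htail
  rw [show γ / 2 + γ / 2 * q = (q + 1) * γ / 2 by ring, inv_rpow ht.le, div_inv_eq_mul]
    at hgamma
  rw [integral_eq_lintegral_of_nonneg_ae (ae_of_all _ fun x => by have := hf0 x; positivity)
    (by fun_prop)]
  refine ENNReal.toReal_le_of_le_ofReal (by positivity) ?_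
  calc ∫⁻ x, ENNReal.ofReal (f x * exp (-g x ^ 2 / t)) ∂μ
      ≤ ∫⁻ x, ENNReal.ofReal c * ENNReal.ofReal (F x ^ (γ / 2) * exp (-(t⁻¹ * F x))) ∂μ := by
        refine lintegral_mono_ae ?_
        filter_upwards [hFg] with x hx
        rw [← ENNReal.ofReal_mul hc.le, ← mul_assoc, ← hfF x]
        gcongr
        · exact hf0 x
        · rw [neg_div, inv_mul_eq_div]
          gcongr
    _ ≤ ENNReal.ofReal c *
          ENNReal.ofReal (C * c ^ q * Gamma ((q + 1) * γ / 2 + 1) * t ^ ((q + 1) * γ / 2)) := by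
        rw [lintegral_const_mul' _ _ ENNReal.ofReal_ne_top]
        exact mul_le_mul_right hgamma _
    _ = _ := by
        rw [← ENNReal.ofReal_mul hc.le, rpow_add_one hc.ne']
        ring_nf

end EnvelopeBounds

theorem integral_mul_exp_neg_le_one {E : Type*} [MeasurableSpace E] {μ : Measure E}
    [IsProbabilityMeasure μ] {f g : E → ℝ} (hf0 : ∀ x, 0 ≤ f x) (hf1 : ∀ x, f x ≤ 1) {t : ℝ}
    (ht : 0 ≤ t) : ∫ x, f x * exp (-g x ^ 2 / t) ∂μ ≤ 1 := by
  have hbound : ∀ x, ‖f x * exp (-g x ^ 2 / t)‖ ≤ 1 := fun x => by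
    have hexp : exp (-g x ^ 2 / t) ≤ 1 :=
      exp_le_one_iff.mpr (div_nonpos_of_nonpos_of_nonneg (neg_nonpos.mpr (sq_nonneg _)) ht)
    rw [Real.norm_of_nonneg (by have := hf0 x; positivity)]
    exact mul_le_one₀ (hf1 x) (exp_nonneg _) hexp
  simpa using (le_norm_self _).trans (norm_integral_le_of_norm_le_const (ae_of_all μ hbound))

theorem le_max_mul_rpow_of_le_mul_rpow_of_le_one {I C₀ β e t : ℝ} (ht : 0 < t) (he : 0 ≤ e)
    (heβ : e ≤ β) (hI₀ : I ≤ C₀ * t ^ β) (hI₁ : I ≤ 1) :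
    I ≤ max C₀ 1 * t ^ e := by
  rcases le_or_gt t 1 with ht₁ | ht₁
  · calc I ≤ C₀ * t ^ β := hI₀
      _ ≤ max C₀ 1 * t ^ e := mul_le_mul (le_max_left _ _)
        (rpow_le_rpow_of_exponent_ge ht ht₁ heβ) (by positivity) (by positivity)
  · calc I ≤ 1 * 1 := by simpa using hI₁
      _ ≤ max C₀ 1 * t ^ e :=
        mul_le_mul (le_max_right _ _) (one_le_rpow ht₁.le he) zero_le_one (by positivity)

theorem tauDist_nonneg {d : ℕ} (X : Set (EuclideanSpace ℝ (Fin d)))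
    (η : EuclideanSpace ℝ (Fin d) → ℝ) (x : EuclideanSpace ℝ (Fin d)) : 0 ≤ tauDist X η x := by
  unfold tauDist
  split_ifs <;> first | exact infDist_nonneg | exact le_rfl

theorem measurable_tauDist {d : ℕ} (X : Set (EuclideanSpace ℝ (Fin d)))
    {η : EuclideanSpace ℝ (Fin d) → ℝ} (hη : Measurable η) : Measurable (tauDist X η) :=
  Measurable.ite (hη measurableSet_Iio) (continuous_infDist_pt _).measurable <|
    Measurable.ite (measurableSet_lt measurable_const hη) (continuous_infDist_pt _).measurable
      measurable_const

theorem geom_noise_of_envelope_tsybakov_general {d : ℕ}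
    (X : Set (EuclideanSpace ℝ (Fin d)))
    (μ : Measure (EuclideanSpace ℝ (Fin d))) [IsProbabilityMeasure μ] (hsupp : μ Xᶜ = 0)
    (η : EuclideanSpace ℝ (Fin d) → ℝ) (hηm : Measurable η)
    (hη : ∀ x, η x ∈ Set.Icc (0 : ℝ) 1) (γ cγ C q : ℝ) (hγ : 0 < γ) (hcγ : 0 < cγ)
    (hC : 0 < C) (hq0 : 0 ≤ q)
    (henv : ∀ᵐ x ∂μ, |2 * η x - 1| ≤ cγ * tauDist X η x ^ γ)
    (htsy : ∀ s : ℝ, 0 < s → (μ {x | |2 * η x - 1| ≤ s}).toReal ≤ C * s ^ q) :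
    (1 ≤ q → HasGeomNoiseExponent X μ η ((q + 1) * γ / d)) ∧
    (q < 1 → ∀ α : ℝ, 0 < α → α < (q + 1) * γ / d → HasGeomNoiseExponent X μ η α) := by
  have hX : μ.restrict X = μ := Measure.restrict_eq_self_of_ae_mem (mem_ae_iff.mpr hsupp)
  have hf1 : ∀ x, |2 * η x - 1| ≤ 1 := fun x =>
    abs_le.mpr ⟨by linarith [(hη x).1], by linarith [(hη x).2]⟩
  have hgeom : ∀ α, 0 ≤ α → α * d ≤ (q + 1) * γ → HasGeomNoiseExponent X μ η α := by
    intro α hα hαd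
    refine ⟨max (cγ ^ (q + 1) * C * Gamma ((q + 1) * γ / 2 + 1)) 1,
      lt_max_of_lt_right one_pos, fun t ht => ?_⟩
    rw [hX]
    refine le_max_mul_rpow_of_le_mul_rpow_of_le_one ht (by positivity) (by linarith)
      (integral_mul_exp_neg_sq_div_le_of_envelope (by fun_prop) (fun _ => abs_nonneg _)
        (measurable_tauDist X hηm) (tauDist_nonneg X η) hγ hcγ hC.le hq0 henv htsy ht)
      (integral_mul_exp_neg_le_one (fun _ => abs_nonneg _) hf1 ht.le)
  have hd : (q + 1) * γ / d * d ≤ (q + 1) * γ := by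
    rcases (Nat.cast_nonneg d : (0 : ℝ) ≤ d).eq_or_lt with hd | hd
    · rw [← hd, mul_zero]; positivity
    · rw [div_mul_cancel₀ _ hd.ne']
  exact ⟨fun _ => hgeom _ (by positivity) hd, fun _ α hα hαq =>
    hgeom α hα.le ((mul_le_mul_of_nonneg_right hαq.le (Nat.cast_nonneg d)).trans hd)⟩

/-- Theorem 2.6: if `P` has an envelope of order `γ > 0` and Tsybakov noise exponent
`q ∈ [0,∞)` then it has geometric noise exponent `(q+1)γ/d` if `q ≥ 1`, and geometric noise
exponent `α` for every `0 < α < (q+1)γ/d` if `0 ≤ q < 1`. -/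
theorem geom_noise_of_envelope_tsybakov {d : ℕ} (hd : 1 ≤ d)
    (X : Set (EuclideanSpace ℝ (Fin d))) (hX : IsCompact X)
    (μ : Measure (EuclideanSpace ℝ (Fin d))) [IsProbabilityMeasure μ] (hsupp : μ Xᶜ = 0)
    (η : EuclideanSpace ℝ (Fin d) → ℝ) (hηm : Measurable η)
    (hη : ∀ x, η x ∈ Set.Icc (0 : ℝ) 1) (γ cγ C q : ℝ) (hγ : 0 < γ) (hcγ : 0 < cγ)
    (hC : 0 < C) (hq0 : 0 ≤ q)
    (henv : ∀ᵐ x ∂μ, |2 * η x - 1| ≤ cγ * tauDist X η x ^ γ)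
    (htsy : ∀ s : ℝ, 0 < s → (μ {x | |2 * η x - 1| ≤ s}).toReal ≤ C * s ^ q) :
    (1 ≤ q → HasGeomNoiseExponent X μ η ((q + 1) * γ / d)) ∧
    (q < 1 → ∀ α : ℝ, 0 < α → α < (q + 1) * γ / d → HasGeomNoiseExponent X μ η α) :=
  geom_noise_of_envelope_tsybakov_general X μ hsupp η hηm hη γ cγ C q hγ hcγ hC hq0 henv htsy
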